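/- For any nonnegative measurable f on ℝ^d, ‖R^♯(Jf)‖_{L^{d+1}(ℝ^d)} = ‖R^♯ f‖_{L^{d+1}(ℝ^d)}. -/

import Mathlib

/-!
After Fubini, `R♯(Jf)(x'', x_{d-1}, x_d)` is an integral over `s ≠ 0` of slices in `u ∈ ℝ^{d-2}`.
Substituting `u ↦ s u` in each slice trades `|s|^{-d}` for the weight `s^{-2}`, and the
substitution `s ↦ s⁻¹` on `ℝ` absorbs that weight, leaving `R♯f(x'', x_d, x_{d-1})`. Swapping the
last two coordinates preserves Lebesgue measure, so the two `L^{d+1}` norms agree.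
-/

open MeasureTheory
open scoped ENNReal

noncomputable def Rsharp (d : ℕ) (f : EuclideanSpace ℝ (Fin (d-2)) × ℝ × ℝ → ℝ≥0∞) :
    EuclideanSpace ℝ (Fin (d-2)) × ℝ × ℝ → ℝ≥0∞ := fun x =>
  ∫⁻ y' : EuclideanSpace ℝ (Fin (d-2)) × ℝ,
    f (y'.1, y'.2, x.2.2 + (inner ℝ y'.1 x.1 + y'.2 * x.2.1))

noncomputable def Jnn (d : ℕ) (f : EuclideanSpace ℝ (Fin (d-2)) × ℝ × ℝ → ℝ≥0∞) :
    EuclideanSpace ℝ (Fin (d-2)) × ℝ × ℝ → ℝ≥0∞ := fun p =>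
  if p.2.1 = 0 then 0 else
    ENNReal.ofReal (|p.2.1|⁻¹ ^ d) * f (p.2.1⁻¹ • p.1, p.2.1⁻¹, p.2.1⁻¹ * p.2.2)

theorem MeasureTheory.Measure.lintegral_comp_smul {E : Type*} [NormedAddCommGroup E]
    [NormedSpace ℝ E] [MeasurableSpace E] [BorelSpace E] [FiniteDimensional ℝ E]
    (μ : Measure E) [μ.IsAddHaarMeasure] (g : E → ℝ≥0∞) {r : ℝ} (hr : r ≠ 0) :
    ∫⁻ x, g (r • x) ∂μ = ENNReal.ofReal |(r ^ Module.finrank ℝ E)⁻¹| * ∫⁻ x, g x ∂μ := by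
  rw [← smul_eq_mul, ← lintegral_smul_measure, ← Measure.map_addHaar_smul μ hr]
  exact (lintegral_map_equiv g (Homeomorph.smulOfNeZero r hr).toMeasurableEquiv).symm

theorem lintegral_inv_sq_mul_comp_inv (g : ℝ → ℝ≥0∞) :
    ∫⁻ x, ENNReal.ofReal (x ^ 2)⁻¹ * g x⁻¹ = ∫⁻ x, g x := by
  have hderiv : ∀ x ∈ ({0}ᶜ : Set ℝ), HasDerivWithinAt Inv.inv (-(x ^ 2)⁻¹) {0}ᶜ x :=
    fun x hx => (hasDerivAt_inv hx).hasDerivWithinAt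
  have hcov := lintegral_image_eq_lintegral_abs_deriv_mul (measurableSet_singleton 0).compl
    hderiv inv_injective.injOn g
  rw [Set.image_inv_eq_inv, Set.compl_inv, Set.inv_singleton, inv_zero,
    restrict_compl_singleton] at hcov
  simp only [abs_neg, abs_inv, abs_pow, sq_abs] at hcov
  exact hcov.symm

theorem inv_abs_pow_mul_abs_inv_inv_pow {d : ℕ} (hd : 2 ≤ d) {s : ℝ} (hs : s ≠ 0) :
    |s|⁻¹ ^ d * |((s⁻¹) ^ (d-2))⁻¹| = (s ^ 2)⁻¹ := by
  obtain ⟨k, rfl⟩ := Nat.exists_eq_add_of_le' hd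
  simp only [Nat.add_sub_cancel, inv_pow, inv_inv, abs_pow, pow_add, ← sq_abs s]
  field_simp

section

variable {d : ℕ}

theorem Rsharp_eq_lintegral_lintegral {g : EuclideanSpace ℝ (Fin (d-2)) × ℝ × ℝ → ℝ≥0∞}
    (hg : Measurable g) (x : EuclideanSpace ℝ (Fin (d-2)) × ℝ × ℝ) :
    Rsharp d g x = ∫⁻ s, ∫⁻ u, g (u, s, x.2.2 + (inner ℝ u x.1 + s * x.2.1)) := by
  rw [Rsharp, Measure.volume_eq_prod, lintegral_prod_symm _ (by fun_prop)]

theorem measurable_Jnn {f : EuclideanSpace ℝ (Fin (d-2)) × ℝ × ℝ → ℝ≥0∞}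
    (hf : Measurable f) : Measurable (Jnn d f) :=
  Measurable.ite (measurable_snd.fst (measurableSet_singleton 0)) measurable_const (by fun_prop)

-- At `s = 0` both sides vanish, the right one because `(0 ^ 2)⁻¹ = 0` in Lean.
theorem lintegral_Jnn_slice (hd : 2 ≤ d) (f : EuclideanSpace ℝ (Fin (d-2)) × ℝ × ℝ → ℝ≥0∞)
    (a : EuclideanSpace ℝ (Fin (d-2))) (b t s : ℝ) :
    ∫⁻ u, Jnn d f (u, s, t + (inner ℝ u a + s * b))
      = ENNReal.ofReal (s ^ 2)⁻¹ * ∫⁻ u, f (u, s⁻¹, b + (inner ℝ u a + s⁻¹ * t)) := by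
  rcases eq_or_ne s 0 with rfl | hs
  · simp [Jnn]
  have hJ : ∀ u, Jnn d f (u, s, t + (inner ℝ u a + s * b))
      = ENNReal.ofReal (|s|⁻¹ ^ d) * f (s⁻¹ • u, s⁻¹, b + (inner ℝ (s⁻¹ • u) a + s⁻¹ * t)) := by
    intro u
    simp only [Jnn, if_neg hs, real_inner_smul_left]
    congr 4
    field_simp
    ring
  rw [lintegral_congr hJ, lintegral_const_mul' _ _ ENNReal.ofReal_ne_top,
    Measure.lintegral_comp_smul volume (fun u => f (u, s⁻¹, b + (inner ℝ u a + s⁻¹ * t)))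
      (inv_ne_zero hs), finrank_euclideanSpace_fin, ← mul_assoc,
    ← ENNReal.ofReal_mul (by positivity), inv_abs_pow_mul_abs_inv_inv_pow hd hs]

theorem Rsharp_Jnn (hd : 2 ≤ d) {f : EuclideanSpace ℝ (Fin (d-2)) × ℝ × ℝ → ℝ≥0∞}
    (hf : Measurable f) (x : EuclideanSpace ℝ (Fin (d-2)) × ℝ × ℝ) :
    Rsharp d (Jnn d f) x = Rsharp d f (x.1, x.2.2, x.2.1) := by
  rw [Rsharp_eq_lintegral_lintegral (measurable_Jnn hf), Rsharp_eq_lintegral_lintegral hf]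
  simp_rw [lintegral_Jnn_slice hd]
  exact lintegral_inv_sq_mul_comp_inv fun s => ∫⁻ u, f (u, s, x.2.1 + (inner ℝ u x.1 + s * x.2.2))

end

/-- `‖R♯(Jf)‖_{L^{d+1}} = ‖R♯ f‖_{L^{d+1}}` for nonnegative measurable `f`. -/
theorem stmt4 (d : ℕ) (hd : 2 ≤ d)
    (f : EuclideanSpace ℝ (Fin (d-2)) × ℝ × ℝ → ℝ≥0∞) (hf : Measurable f) :
    (∫⁻ x, (Rsharp d (Jnn d f) x) ^ (d+1)) ^ ((1:ℝ)/(d+1))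
      = (∫⁻ x, (Rsharp d f x) ^ (d+1)) ^ ((1:ℝ)/(d+1)) := by
  let σ : EuclideanSpace ℝ (Fin (d-2)) × ℝ × ℝ ≃ᵐ EuclideanSpace ℝ (Fin (d-2)) × ℝ × ℝ :=
    (MeasurableEquiv.refl _).prodCongr MeasurableEquiv.prodComm
  have hσ : MeasurePreserving σ volume volume :=
    (MeasurePreserving.id volume).prod Measure.measurePreserving_swap
  simp_rw [Rsharp_Jnn hd hf]
  congr 1
  exact hσ.lintegral_comp_emb σ.measurableEmbedding fun x => Rsharp d f x ^ (d + 1)
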